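/- arXiv:2408.15563 — 4 statements merged into one kernel-verified Lean document; each statement's English description precedes it below -/
import Mathlib

section
/- Let a = (a_1, …, a_{m+1}) and b = (b_1, …, b_{m+1}) be injective sequences of real numbers (m ≥ 1) such that R(a_1, …, a_m) = R(b_1, …, b_m), R(a_2, …, a_{m+1}) = R(b_2, …, b_{m+1}), and a_1 < a_{m+1} holds exactly when b_1 < b_{m+1}. Then R(a) = R(b). (Hence a relative order of length m+1 is uniquely determined by its prefix order-preserving pattern, its suffix order-preserving pattern, and the comparison between its first and last entries.) -/
/-!
A relative order is determined by the pairwise comparisons `a i < a j`. Every pair of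
positions lies in the prefix or in the suffix, except the pair of the two ends, whose
comparison is given by `hends` in one orientation and, by injectivity, in the other.
-/

/-- The rank of the `i`-th entry of a finite sequence `a`:
`rank_a(a_i) = 1 + |{j : a_j < a_i}|`. -/
noncomputable def rankOf {m : ℕ} (a : Fin m → ℝ) (i : Fin m) : ℕ :=
  1 + (Finset.univ.filter fun j => a j < a i).card

/-- The relative order `R(a) = (rank_a(a_1), …, rank_a(a_m))`. -/
noncomputable def relOrder {m : ℕ} (a : Fin m → ℝ) : Fin m → ℕ :=
  fun i => rankOf a i

section RankOf

variable {m : ℕ} (a : Fin m → ℝ) {i j : Fin m}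

theorem rankOf_le_rankOf (h : a i ≤ a j) : rankOf a i ≤ rankOf a j := by
  unfold rankOf
  gcongr

theorem rankOf_lt_rankOf (h : a i < a j) : rankOf a i < rankOf a j := by
  unfold rankOf
  gcongr
  refine (Finset.ssubset_iff_of_subset ?_).mpr ⟨i, by simp [h]⟩
  gcongr

theorem rankOf_lt_rankOf_iff : rankOf a i < rankOf a j ↔ a i < a j :=
  ⟨fun h => lt_of_not_ge fun h' => (rankOf_le_rankOf a h').not_gt h, rankOf_lt_rankOf a⟩

end RankOf

theorem relOrder_eq_relOrder_iff {m : ℕ} {a b : Fin m → ℝ} :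
    relOrder a = relOrder b ↔ ∀ i j, a i < a j ↔ b i < b j := by
  constructor
  · intro h i j
    rw [← rankOf_lt_rankOf_iff a, ← rankOf_lt_rankOf_iff b]
    exact iff_of_eq (congrArg₂ _ (congrFun h i) (congrFun h j))
  · intro h
    funext i
    simp only [relOrder, rankOf, h]

theorem lt_swap_iff_of_lt_iff {ι α β : Type*} [LinearOrder α] [LinearOrder β] {a : ι → α}
    {b : ι → β} (ha : Function.Injective a) (hb : Function.Injective b) {i j : ι}
    (h : a i < a j ↔ b i < b j) : a j < a i ↔ b j < b i := by
  obtain rfl | hij := eq_or_ne i j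
  · simp
  rw [lt_iff_not_ge, lt_iff_not_ge, (ha.ne hij).le_iff_lt, (hb.ne hij).le_iff_lt, h]

theorem Fin.ne_last_or_ne_zero_or_eq_ends {m : ℕ} (i j : Fin (m + 1)) :
    (i ≠ Fin.last m ∧ j ≠ Fin.last m) ∨ (i ≠ 0 ∧ j ≠ 0) ∨ (i = 0 ∧ j = Fin.last m) ∨
      (i = Fin.last m ∧ j = 0) := by
  simp only [ne_eq, Fin.ext_iff, Fin.val_last, Fin.val_zero]
  omega

theorem relOrder_eq_of_prefix_suffix_ends_general {m : ℕ} (a b : Fin (m + 1) → ℝ)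
    (ha : Function.Injective a) (hb : Function.Injective b)
    (hpre : relOrder (fun i : Fin m => a i.castSucc) = relOrder (fun i : Fin m => b i.castSucc))
    (hsuf : relOrder (fun i : Fin m => a i.succ) = relOrder (fun i : Fin m => b i.succ))
    (hends : a 0 < a (Fin.last m) ↔ b 0 < b (Fin.last m)) :
    relOrder a = relOrder b := by
  rw [relOrder_eq_relOrder_iff] at hpre hsuf ⊢
  intro i j
  rcases Fin.ne_last_or_ne_zero_or_eq_ends i j with ⟨hi, hj⟩ | ⟨hi, hj⟩ | ⟨rfl, rfl⟩ | ⟨rfl, rfl⟩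
  · obtain ⟨i, rfl⟩ := Fin.exists_castSucc_eq.mpr hi
    obtain ⟨j, rfl⟩ := Fin.exists_castSucc_eq.mpr hj
    exact hpre i j
  · obtain ⟨i, rfl⟩ := Fin.exists_succ_eq.mpr hi
    obtain ⟨j, rfl⟩ := Fin.exists_succ_eq.mpr hj
    exact hsuf i j
  · exact hends
  · exact lt_swap_iff_of_lt_iff ha hb hends

/-- For injective sequences `a, b` of length `m + 1` (with `m ≥ 1`), if the relative
orders of their length-`m` prefixes agree, the relative orders of their length-`m`
suffixes agree, and `a_1 < a_{m+1}` holds exactly when `b_1 < b_{m+1}`, then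
`R(a) = R(b)`. -/
theorem relOrder_eq_of_prefix_suffix_ends {m : ℕ} (hm : 1 ≤ m) (a b : Fin (m + 1) → ℝ)
    (ha : Function.Injective a) (hb : Function.Injective b)
    (hpre : relOrder (fun i : Fin m => a i.castSucc) = relOrder (fun i : Fin m => b i.castSucc))
    (hsuf : relOrder (fun i : Fin m => a i.succ) = relOrder (fun i : Fin m => b i.succ))
    (hends : a 0 < a (Fin.last m) ↔ b 0 < b (Fin.last m)) :
    relOrder a = relOrder b :=
  relOrder_eq_of_prefix_suffix_ends_general a b ha hb hpre hsuf hends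
end

section
/- Let r = (r_1, …, r_{m+1}) be an injective sequence of real numbers (m ≥ 1), let p = R(r_1, …, r_m) and q = R(r_2, …, r_{m+1}). If p_1 < q_m then r_1 < r_{m+1}, and if p_1 > q_m then r_1 > r_{m+1}. (Hence when p_1 ≠ q_m, the fusion of p and q can produce only one super-pattern, as in Case 2 of pattern fusion.) -/
open Finset

theorem Fin.card_filter_castSucc {n : ℕ} (P : Fin (n + 1) → Prop) [DecidablePred P] :
    #{j : Fin n | P j.castSucc} = #{i : Fin (n + 1) | i ≠ Fin.last n ∧ P i} := by
  rw [← card_map Fin.castSuccEmb]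
  congr 1
  ext i
  cases i using Fin.lastCases <;> simp

theorem Fin.card_filter_succ {n : ℕ} (P : Fin (n + 1) → Prop) [DecidablePred P] :
    #{j : Fin n | P j.succ} = #{i : Fin (n + 1) | i ≠ 0 ∧ P i} := by
  rw [← card_map (Fin.succEmb n)]
  congr 1
  ext i
  cases i using Fin.cases <;> simp

theorem rankOf_castSucc {n : ℕ} (r : Fin (n + 1) → ℝ) (j : Fin n) :
    rankOf (fun i : Fin n => r i.castSucc) j = 1 + #{i | i ≠ Fin.last n ∧ r i < r j.castSucc} := by
  rw [rankOf, Fin.card_filter_castSucc (fun i => r i < r j.castSucc)]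

theorem rankOf_succ {n : ℕ} (r : Fin (n + 1) → ℝ) (j : Fin n) :
    rankOf (fun i : Fin n => r i.succ) j = 1 + #{i | i ≠ 0 ∧ r i < r j.succ} := by
  rw [rankOf, Fin.card_filter_succ (fun i => r i < r j.succ)]

theorem card_filter_ne_lt_le_of_lt {ι α : Type*} [Fintype ι] [DecidableEq ι] [LinearOrder α]
    (r : ι → α) {a b : ι} (hba : r b < r a) :
    #{i | i ≠ a ∧ r i < r b} ≤ #{i | i ≠ b ∧ r i < r a} :=
  card_le_card fun i hi => by
    have hib : r i < r b := (mem_filter.1 hi).2.2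
    exact mem_filter.2 ⟨mem_univ i, fun h => (h ▸ hib).false, hib.trans hba⟩

/-- Let `r = (r_1, …, r_{m+1})` be injective (`m ≥ 1`), `p = R(r_1, …, r_m)` and
`q = R(r_2, …, r_{m+1})`. If `p_1 < q_m` then `r_1 < r_{m+1}`, and if `p_1 > q_m`
then `r_1 > r_{m+1}`. -/
theorem ends_compare_of_prefix_suffix_ranks {m : ℕ} (hm : 1 ≤ m) (r : Fin (m + 1) → ℝ)
    (hr : Function.Injective r)
    (p q : Fin m → ℕ)
    (hp : p = relOrder (fun i : Fin m => r i.castSucc))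
    (hq : q = relOrder (fun i : Fin m => r i.succ)) :
    (p ⟨0, by omega⟩ < q ⟨m - 1, by omega⟩ → r 0 < r (Fin.last m)) ∧
    (q ⟨m - 1, by omega⟩ < p ⟨0, by omega⟩ → r (Fin.last m) < r 0) := by
  subst hp hq
  have hfirst : (⟨0, by omega⟩ : Fin m).castSucc = 0 := rfl
  have hlast : (⟨m - 1, by omega⟩ : Fin m).succ = Fin.last m := by ext; simp only [Fin.succ_mk, Fin.val_last]; omega
  have hne : r 0 ≠ r (Fin.last m) := hr.ne (Fin.ext_iff.not.2 (by simp only [Fin.val_zero, Fin.val_last]; omega))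
  simp only [relOrder, rankOf_castSucc, rankOf_succ, hfirst, hlast]
  constructor <;> intro hrank <;> by_contra hcmp
  · have := card_filter_ne_lt_le_of_lt r (lt_of_le_of_ne (not_lt.1 hcmp) hne.symm)
    omega
  · have := card_filter_ne_lt_le_of_lt r (lt_of_le_of_ne (not_lt.1 hcmp) hne)
    omega
end

section
/- Let t = (t_1, …, t_n) be a time series and let r = (r_1, …, r_{m+1}) be a pattern (m ≥ 1) whose suffix sub-pattern is s = (r_2, …, r_{m+1}). If ⟨j⟩ is an occurrence of r in t, then ⟨j⟩ is also an occurrence of s in t. Consequently L_r ⊆ L_s (anti-monotonicity with respect to the suffix pattern). -/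
open scoped Classical

/-- `⟨j⟩` (1-based, `m ≤ j ≤ n`) is an occurrence of the length-`m` pattern `p` in
the time series `t = (t_1, …, t_n)`:  `R(t_{j-m+1}, …, t_j) = R(p)`. -/
def isOcc {n m : ℕ} (t : Fin n → ℝ) (p : Fin m → ℝ) (j : ℕ) : Prop :=
  ∃ (_hm : m ≤ j) (_hn : j ≤ n),
    relOrder (fun i : Fin m => t ⟨j - m + i.val, by have := i.isLt; omega⟩) = relOrder p

lemma lt_iff_rank_lt {m : ℕ} (a : Fin m → ℝ) (i j : Fin m) :
    a i < a j ↔ rankOf a i < rankOf a j := by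
  unfold rankOf
  constructor
  · intro h
    have hsub : (Finset.univ.filter fun k => a k < a i) ⊂
        (Finset.univ.filter fun k => a k < a j) := by
      constructor
      · intro k hk
        simp only [Finset.mem_filter, Finset.mem_univ, true_and] at *
        exact hk.trans h
      · intro hle
        have := hle (by simp [h] : i ∈ Finset.univ.filter fun k => a k < a j)
        simp at this
    have := Finset.card_lt_card hsub
    omega
  · intro h
    by_contra hc
    push_neg at hc
    have hsub : (Finset.univ.filter fun k => a k < a j) ⊆
        (Finset.univ.filter fun k => a k < a i) := by
      intro k hk
      simp only [Finset.mem_filter, Finset.mem_univ, true_and] at *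
      exact lt_of_lt_of_le hk hc
    have := Finset.card_le_card hsub
    omega

lemma lt_iff_of_relOrder_eq {m : ℕ} {a b : Fin m → ℝ} (h : relOrder a = relOrder b)
    (i j : Fin m) : a i < a j ↔ b i < b j := by
  rw [lt_iff_rank_lt, lt_iff_rank_lt b]
  have hi := congrFun h i
  have hj := congrFun h j
  simp only [relOrder] at hi hj
  rw [hi, hj]

lemma relOrder_eq_of_lt_iff {m : ℕ} {a b : Fin m → ℝ}
    (h : ∀ i j, a i < a j ↔ b i < b j) : relOrder a = relOrder b := by
  funext i
  simp only [relOrder, rankOf]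
  congr 1
  apply Finset.card_bij (fun k _ => k) <;> intro k hk <;>
    simp only [Finset.mem_filter, Finset.mem_univ, true_and] at *
  · exact (h k i).mp hk
  · intro k' _ e; exact e
  · exact ⟨k, (h k i).mpr hk, rfl⟩

/-- Anti-monotonicity with respect to the suffix pattern: every occurrence `⟨j⟩` of
`r = (r_1, …, r_{m+1})` is also an occurrence of the suffix sub-pattern
`s = (r_2, …, r_{m+1})`; hence `L_r ⊆ L_s`. -/
theorem suffix_antimonotone {n m : ℕ} (hm : 1 ≤ m) (t : Fin n → ℝ)
    (r : Fin (m + 1) → ℝ) :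
    (∀ j : ℕ, isOcc t r j → isOcc t (fun i : Fin m => r i.succ) j) ∧
    {j : ℕ | isOcc t r j} ⊆ {j : ℕ | isOcc t (fun i : Fin m => r i.succ) j} := by
  have main : ∀ j : ℕ, isOcc t r j → isOcc t (fun i : Fin m => r i.succ) j := by
    intro j hj
    obtain ⟨hmj, hjn, heq⟩ := hj
    refine ⟨by omega, hjn, ?_⟩
    apply relOrder_eq_of_lt_iff
    intro i k
    have key := lt_iff_of_relOrder_eq heq i.succ k.succ
    convert key using 3 <;> simp [Fin.val_succ] <;> omega
  exact ⟨main, fun j hj => main j hj⟩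
end

section
/- (Completeness of the suffix pattern pruning strategy.) Let t = (t_1, …, t_n) be a time series, let k > 0 be the forgetting factor, and let r be a pattern of length m+1 with suffix sub-pattern s = (r_2, …, r_{m+1}). Then fsup(r, t) ≤ fsup(s, t). In particular, for any threshold minsup, if fsup(s, t) < minsup then fsup(r, t) < minsup, so r cannot be a frequent order-preserving pattern with forgetting mechanism. -/
open scoped Classical

/-- The occurrence set `L_p` of pattern `p` in `t`, as a finset of positions. -/
noncomputable def occSet {n m : ℕ} (t : Fin n → ℝ) (p : Fin m → ℝ) : Finset ℕ :=
  (Finset.Icc 1 n).filter fun j => isOcc t p j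

/-- The forgetting value of position `j`: `f_j = e^{-k(n-j)}`. -/
noncomputable def fval (k : ℝ) (n j : ℕ) : ℝ :=
  Real.exp (-(k * ((n : ℝ) - (j : ℝ))))

/-- The support with forgetting mechanism: `fsup(p, t) = Σ_{j ∈ L_p} f_j`. -/
noncomputable def fsup {n m : ℕ} (k : ℝ) (t : Fin n → ℝ) (p : Fin m → ℝ) : ℝ :=
  ∑ j ∈ occSet t p, fval k n j


lemma rank_lt_iff {m : ℕ} (a : Fin m → ℝ) (i j : Fin m) :
    rankOf a i < rankOf a j ↔ a i < a j := by
  unfold rankOf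
  constructor
  · intro h
    by_contra hle
    push_neg at hle
    have : (Finset.univ.filter fun l => a l < a j) ⊆
        (Finset.univ.filter fun l => a l < a i) := by
      intro l hl
      simp only [Finset.mem_filter, Finset.mem_univ, true_and] at *
      exact lt_of_lt_of_le hl hle
    have := Finset.card_le_card this
    omega
  · intro h
    have hss : (Finset.univ.filter fun l => a l < a i) ⊂
        (Finset.univ.filter fun l => a l < a j) := by
      constructor
      · intro l hl
        simp only [Finset.mem_filter, Finset.mem_univ, true_and] at *
        exact lt_trans hl h
      · intro hsub
        have := hsub (by simp [h] : i ∈ Finset.univ.filter fun l => a l < a j)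
        simp at this
    have := Finset.card_lt_card hss
    omega

lemma relOrder_suffix {m : ℕ} (a b : Fin (m + 1) → ℝ)
    (h : relOrder a = relOrder b) :
    relOrder (fun i : Fin m => a i.succ) = relOrder (fun i : Fin m => b i.succ) := by
  have key : ∀ i j : Fin (m + 1), a i < a j ↔ b i < b j := by
    intro i j
    rw [← rank_lt_iff, ← rank_lt_iff]
    have hi := congrFun h i
    have hj := congrFun h j
    simp only [relOrder] at hi hj
    omega
  funext i
  simp only [relOrder, rankOf]
  congr 1
  apply Finset.card_nbij id (by intro x hx; simpa [key] using hx)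
    (fun x _ y _ h => h)
  · intro x hx
    refine ⟨x, ?_, rfl⟩
    simp only [Finset.coe_filter, Finset.mem_univ, true_and, Set.mem_setOf_eq] at *
    exact (key _ _).2 hx

/-- Completeness of the suffix pattern pruning strategy: for forgetting factor
`k > 0`, `fsup(r, t) ≤ fsup(s, t)` where `s = (r_2, …, r_{m+1})` is the suffix
sub-pattern of `r`, and if `fsup(s, t) < minsup` then `fsup(r, t) < minsup`, so
`r` is not frequent. -/
theorem suffix_pruning_complete {n m : ℕ} (t : Fin n → ℝ) (k : ℝ) (hk : 0 < k)
    (r : Fin (m + 1) → ℝ) :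
    fsup k t r ≤ fsup k t (fun i : Fin m => r i.succ) ∧
    ∀ minsup : ℝ,
      fsup k t (fun i : Fin m => r i.succ) < minsup → fsup k t r < minsup := by
  constructor
  · apply Finset.sum_le_sum_of_subset_of_nonneg
    · intro j hj
      simp only [occSet, Finset.mem_filter] at *
      obtain ⟨hj1, hm, hn, heq⟩ := hj
      refine ⟨hj1, by omega, hn, ?_⟩
      have := relOrder_suffix _ _ heq
      convert this using 2
      funext i
      congr 1
      apply Fin.ext
      simp only [Fin.val_succ]
      omega
    · intro j _ _
      exact le_of_lt (Real.exp_pos _)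
  · intro minsup hlt
    calc fsup k t r ≤ _ := ?_
      _ < minsup := hlt
    apply Finset.sum_le_sum_of_subset_of_nonneg
    · intro j hj
      simp only [occSet, Finset.mem_filter] at *
      obtain ⟨hj1, hm, hn, heq⟩ := hj
      refine ⟨hj1, by omega, hn, ?_⟩
      have := relOrder_suffix _ _ heq
      convert this using 2
      funext i
      congr 1
      apply Fin.ext
      simp only [Fin.val_succ]
      omega
    · intro j _ _
      exact le_of_lt (Real.exp_pos _)
end
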